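/- Let (E,𝒫) be a random locally convex module over K with base (Ω,𝓕,P) and f : E → L⁰(𝓕,K) an L⁰(𝓕,K)-linear map. Then f is a.s. bounded of type II (i.e., there exist ξ ∈ L⁰₊(𝓕), a countable partition {Aₙ} of Ω into 𝓕-measurable sets, and finite subsets Qₙ ⊆ 𝒫 such that |f(x)| ≤ ξ·Σₙ Ĩ_{Aₙ}‖x‖_{Qₙ} a.e. for all x ∈ E) if and only if there exist a countable partition {Bₙ} of Ω into 𝓕-measurable sets and a sequence {fₙ} of a.s. bounded L⁰(𝓕,K)-linear functionals of type I (i.e., for each n there exist ξₙ ∈ L⁰₊(𝓕) and a finite Qₙ' ⊆ 𝒫 with |fₙ(x)| ≤ ξₙ‖x‖_{Qₙ'} a.e. for all x) such that f(x) agrees a.e. on Bₙ with fₙ(x) for every n and every x ∈ E. (In the paper's notation: E*_{ε,λ} = (E,𝒫_cc)*_c = H_cc(E*_c).) -/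

import Mathlib

open MeasureTheory Filter

/-- For a finite subset `Q` of the index set of a family of `L⁰`-seminorms, the pointwise
supremum `‖x‖_Q = ⋁{‖x‖ : ‖·‖ ∈ Q}` (the seminorms being a.e. nonnegative, truncating negative
values on the exceptional null set is harmless, and the supremum over the empty family is `0`). -/
noncomputable def finSup {ι : Type*} (Q : Finset ι) (g : ι → ℝ) : ℝ :=
  ((Q.sup fun i => Real.toNNReal (g i) : NNReal) : ℝ)

/-!
Both directions are localizations along a countable measurable partition. A type II bound
restricted to `Aₙ` is a type I bound for the functional `Ĩ_{Aₙ} f`, which agrees with `f` on `Aₙ`.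
Conversely, the bounds `ξₙ` of the type I pieces `fₙ` glue along the partition `{Bₙ}` into a
single `ξ ∈ L⁰₊(𝓕)`, and then `|f(x)| = |fₙ(x)| ≤ ξ ‖x‖_{Qₙ}` on each `Bₙ`.
-/

open Set

namespace MeasureTheory.AEEqFun

variable {α : Type*} [MeasurableSpace α] {μ : Measure α}

theorem mul_add {γ : Type*} [TopologicalSpace γ] [Distrib γ] [ContinuousMul γ] [ContinuousAdd γ]
    (f g h : α →ₘ[μ] γ) : f * (g + h) = f * g + f * h :=
  induction_on₃ f g h fun _ _ _ _ _ _ => by simp only [mk_add_mk, mk_mul_mk, _root_.mul_add]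

noncomputable def indicatorOne {γ : Type*} [TopologicalSpace γ] [Zero γ] [One γ] {s : Set α}
    (hs : MeasurableSet s) : α →ₘ[μ] γ :=
  mk (s.indicator 1) (stronglyMeasurable_one.indicator hs).aestronglyMeasurable

theorem coeFn_indicatorOne_mul {γ : Type*} [TopologicalSpace γ] [MulZeroOneClass γ]
    [ContinuousMul γ] {s : Set α} (hs : MeasurableSet s) (g : α →ₘ[μ] γ) :
    ⇑((indicatorOne hs : α →ₘ[μ] γ) * g) =ᵐ[μ] s.indicator g := by
  filter_upwards [coeFn_mul (indicatorOne hs) g, coeFn_mk (μ := μ) (s.indicator (1 : α → γ))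
    (stronglyMeasurable_one.indicator hs).aestronglyMeasurable] with a hmul hind
  rw [hmul, Pi.mul_apply, indicatorOne, hind]
  by_cases ha : a ∈ s <;> simp [ha]

theorem exists_ae_eq_on_partition {ι β : Type*} [Countable ι] [TopologicalSpace β]
    [TopologicalSpace.PseudoMetrizableSpace β] {B : ι → Set α} (hB : ∀ n, MeasurableSet (B n))
    (hdisj : Pairwise (Function.onFun Disjoint B)) (hcover : ⋃ n, B n = univ)
    (g : ι → α →ₘ[μ] β) : ∃ h : α →ₘ[μ] β, ∀ᵐ a ∂μ, ∀ n, a ∈ B n → h a = g n a := by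
  have hmem : ∀ a, ∃ n, a ∈ B n := fun a => mem_iUnion.1 (hcover ▸ mem_univ a)
  set G : α → β := fun a => g (hmem a).choose a
  have hG : ∀ n, ∀ a ∈ B n, G a = g n a := fun n a ha => by
    have hidx : (hmem a).choose = n := by
      by_contra hne
      exact disjoint_left.1 (hdisj hne) (hmem a).choose_spec ha
    simp only [G, hidx]
  have hGm : AEStronglyMeasurable G μ := by
    rw [← Measure.restrict_univ (μ := μ), ← hcover, aestronglyMeasurable_iUnion_iff]
    exact fun n => (g n).aestronglyMeasurable.restrict.congr
      ((ae_restrict_iff' (hB n)).2 (Eventually.of_forall fun a ha => (hG n a ha).symm))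
  refine ⟨mk G hGm, ?_⟩
  filter_upwards [coeFn_mk G hGm] with a ha n han
  rw [ha, hG n a han]

end MeasureTheory.AEEqFun

theorem finSup_nonneg {ι : Type*} (Q : Finset ι) (g : ι → ℝ) : 0 ≤ finSup Q g :=
  NNReal.coe_nonneg _

theorem stmt5_general
    {Ω K ι E : Type*} [MeasurableSpace Ω] {P : Measure Ω}
    [RCLike K] [AddCommGroup E] [SMul (Ω →ₘ[P] K) E]
    (p : ι → E → Ω →ₘ[P] ℝ)
    -- `f` is an `L⁰(𝓕,K)`-linear map
    (f : E → Ω →ₘ[P] K)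
    (hf_add : ∀ x y, f (x + y) = f x + f y)
    (hf_smul : ∀ (ξ : Ω →ₘ[P] K) (x : E), f (ξ • x) = ξ * f x) :
    -- `f` is a.s. bounded of type II …
    (∃ (ξ : Ω →ₘ[P] ℝ) (A : ℕ → Set Ω) (Q : ℕ → Finset ι),
      (∀ᵐ ω ∂P, 0 ≤ ξ ω) ∧
      (∀ n, MeasurableSet (A n)) ∧ Pairwise (Function.onFun Disjoint A) ∧ (⋃ n, A n) = Set.univ ∧
      ∀ x, ∀ᵐ ω ∂P, ∀ n, ω ∈ A n → ‖f x ω‖ ≤ ξ ω * finSup (Q n) (fun i => p i x ω))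
    ↔
    -- … iff `f` is a countable concatenation of type I functionals
    (∃ (B : ℕ → Set Ω) (F : ℕ → E → Ω →ₘ[P] K),
      (∀ n, MeasurableSet (B n)) ∧ Pairwise (Function.onFun Disjoint B) ∧ (⋃ n, B n) = Set.univ ∧
      (∀ n, (∀ x y, F n (x + y) = F n x + F n y) ∧
            (∀ (ξ : Ω →ₘ[P] K) (x : E), F n (ξ • x) = ξ * F n x) ∧
            (∃ (ξ : Ω →ₘ[P] ℝ) (Q : Finset ι), (∀ᵐ ω ∂P, 0 ≤ ξ ω) ∧
              ∀ x, ∀ᵐ ω ∂P, ‖F n x ω‖ ≤ ξ ω * finSup Q (fun i => p i x ω))) ∧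
      ∀ x, ∀ᵐ ω ∂P, ∀ n, ω ∈ B n → f x ω = F n x ω) := by
  constructor
  · rintro ⟨ξ, A, Q, hξ, hA, hdisj, hcover, hbound⟩
    refine ⟨A, fun n x => AEEqFun.indicatorOne (hA n) * f x, hA, hdisj, hcover, fun n =>
      ⟨fun x y => by simp only [hf_add, AEEqFun.mul_add],
        fun ζ x => by simp only [hf_smul, mul_left_comm],
        ξ, Q n, hξ, fun x => ?_⟩, fun x => ae_all_iff.2 fun n => ?_⟩
    · filter_upwards [AEEqFun.coeFn_indicatorOne_mul (hA n) (f x), hbound x, hξ] with ω hω hbω hξω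
      rw [hω, norm_indicator_eq_indicator_norm]
      exact indicator_apply_le' (hbω n) fun _ => mul_nonneg hξω (finSup_nonneg _ _)
    · filter_upwards [AEEqFun.coeFn_indicatorOne_mul (hA n) (f x)] with ω hω hωA
      rw [hω, indicator_of_mem hωA]
  · rintro ⟨B, F, hB, hdisj, hcover, hF, hfF⟩
    choose _ _ ξ Q hξ hFbound using hF
    obtain ⟨η, hη⟩ := AEEqFun.exists_ae_eq_on_partition hB hdisj hcover ξ
    have hη_nonneg : ∀ᵐ ω ∂P, 0 ≤ η ω := by
      filter_upwards [hη, ae_all_iff.2 hξ] with ω hηω hξω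
      obtain ⟨n, hn⟩ := mem_iUnion.1 (hcover ▸ mem_univ ω)
      exact hηω n hn ▸ hξω n
    refine ⟨η, B, Q, hη_nonneg, hB, hdisj, hcover, fun x => ?_⟩
    filter_upwards [hη, hfF x, ae_all_iff.2 fun n => hFbound n x] with ω hηω hfω hFω n hn
    rw [hfω n hn, hηω n hn]
    exact hFω n

/-- For a random locally convex module `(E,𝒫)` over `K` with base `(Ω,𝓕,P)`
and an `L⁰(𝓕,K)`-linear map `f : E → L⁰(𝓕,K)`: `f` is a.s. bounded of type II iff there are a
countable measurable partition `{Bₙ}` of `Ω` and a sequence `{fₙ}` of a.s. bounded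
`L⁰(𝓕,K)`-linear functionals of type I with `f = fₙ` a.e. on `Bₙ` for each `n`
(i.e. `E*_{ε,λ} = (E,𝒫_cc)*_c = H_cc(E*_c)`). -/
theorem stmt5
    {Ω K ι E : Type*} [MeasurableSpace Ω] {P : Measure Ω} [IsProbabilityMeasure P]
    [RCLike K] [AddCommGroup E] [SMul (Ω →ₘ[P] K) E]
    -- `E` is a left module over `L⁰(𝓕,K)`
    (hmoda : ∀ (ξ : Ω →ₘ[P] K) (x y : E), ξ • (x + y) = ξ • x + ξ • y)
    (hmodb : ∀ (ξ η : Ω →ₘ[P] K) (x : E), (ξ + η) • x = ξ • x + η • x)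
    (hmodc : ∀ (ξ η : Ω →ₘ[P] K) (x : E), (ξ * η) • x = ξ • (η • x))
    (hmodd : ∀ x : E, (1 : Ω →ₘ[P] K) • x = x)
    -- `𝒫 = {p i : i ∈ ι}` is a separating family of `L⁰`-seminorms on `E`
    (p : ι → E → Ω →ₘ[P] ℝ)
    (hp_pos : ∀ i x, ∀ᵐ ω ∂P, 0 ≤ p i x ω)
    (hp_tri : ∀ i x y, ∀ᵐ ω ∂P, p i (x + y) ω ≤ p i x ω + p i y ω)
    (hp_hom : ∀ i (ξ : Ω →ₘ[P] K) (x : E), ∀ᵐ ω ∂P, p i (ξ • x) ω = ‖ξ ω‖ * p i x ω)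
    (hp_sep : ∀ x : E, (∀ i, ∀ᵐ ω ∂P, p i x ω = 0) → x = 0)
    -- `f` is an `L⁰(𝓕,K)`-linear map
    (f : E → Ω →ₘ[P] K)
    (hf_add : ∀ x y, f (x + y) = f x + f y)
    (hf_smul : ∀ (ξ : Ω →ₘ[P] K) (x : E), f (ξ • x) = ξ * f x) :
    -- `f` is a.s. bounded of type II …
    (∃ (ξ : Ω →ₘ[P] ℝ) (A : ℕ → Set Ω) (Q : ℕ → Finset ι),
      (∀ᵐ ω ∂P, 0 ≤ ξ ω) ∧
      (∀ n, MeasurableSet (A n)) ∧ Pairwise (Function.onFun Disjoint A) ∧ (⋃ n, A n) = Set.univ ∧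
      ∀ x, ∀ᵐ ω ∂P, ∀ n, ω ∈ A n → ‖f x ω‖ ≤ ξ ω * finSup (Q n) (fun i => p i x ω))
    ↔
    -- … iff `f` is a countable concatenation of type I functionals
    (∃ (B : ℕ → Set Ω) (F : ℕ → E → Ω →ₘ[P] K),
      (∀ n, MeasurableSet (B n)) ∧ Pairwise (Function.onFun Disjoint B) ∧ (⋃ n, B n) = Set.univ ∧
      (∀ n, (∀ x y, F n (x + y) = F n x + F n y) ∧
            (∀ (ξ : Ω →ₘ[P] K) (x : E), F n (ξ • x) = ξ * F n x) ∧
            (∃ (ξ : Ω →ₘ[P] ℝ) (Q : Finset ι), (∀ᵐ ω ∂P, 0 ≤ ξ ω) ∧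
              ∀ x, ∀ᵐ ω ∂P, ‖F n x ω‖ ≤ ξ ω * finSup Q (fun i => p i x ω))) ∧
      ∀ x, ∀ᵐ ω ∂P, ∀ n, ω ∈ B n → f x ω = F n x ω) :=
  stmt5_general p f hf_add hf_smul
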